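/- For n > k > 0: if k ≡ 2 (mod 4) then T(n,k,2) = L(n,k), and if k is odd or k ≡ 0 (mod 4) then T(n,k,1) = L(n,k), where L(n,k) = (1/n)·∑_{d | gcd(n,k)} μ(d)·C(n/d,k/d) is the number of aperiodic necklaces (binary Lyndon words) with k black beads and n−k white beads. -/

import Mathlib

/-!
Count with the characters of `ℤ/nℤ`: `n · T(n,k,s) = ∑_t ψ(-ts) e_k(ψ(ta) : a ∈ ℤ/nℤ)`. When `t`
has order `e`, the values `ψ(ta)` run `n/e` times through the `e`-th roots of unity, so
`∏_a (X + ψ(ta)) = (X^e + (-1)^(e+1))^(n/e)` and `e_k` vanishes unless `e ∣ k`. Grouping the `t`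
by order gives `n · T(n,k,s) = ∑_{e ∣ (n,k)} (-1)^((e+1)k/e) C(n/e,k/e) c_e(s)`, where the
Ramanujan sum `c_e(s) = ∑_{d ∣ (e,s)} μ(e/d) d` follows from `∑_{d ∣ e} c_d(s) = e [e ∣ s]` by
Möbius inversion. Now `c_e(1) = μ(e)` and `c_e(2) = μ(e) + 2μ(e/2) [2 ∣ e]`, and the congruence
condition on `k` is exactly what makes the sign turn each term into `μ(e) C(n/e,k/e)`.
-/

/-- `T n k s` is the number of `k`-element subsets of `ℤ/nℤ` whose sum of elements
is `s` modulo `n`. -/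
noncomputable def T (n k : ℕ) (s : ℤ) : ℕ :=
  Nat.card {Q : Finset (ZMod n) // Q.card = k ∧ (∑ a ∈ Q, a) = (s : ZMod n)}

/-- `L n k` is the number of aperiodic necklaces (binary Lyndon words) with `k` black
beads and `n - k` white beads: `L(n,k) = (1/n) ∑_{d ∣ gcd(n,k)} μ(d) C(n/d, k/d)`. -/
noncomputable def L (n k : ℕ) : ℚ :=
  (1 / n) * ∑ d ∈ (Nat.gcd n k).divisors,
    (ArithmeticFunction.moebius d : ℤ) * (Nat.choose (n / d) (k / d) : ℚ)

open Finset Polynomial ArithmeticFunction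
open scoped ArithmeticFunction.Moebius

noncomputable def ramanujanSum (q s : ℕ) : ℂ := ∑ ζ ∈ primitiveRoots q ℂ, ζ ^ s

theorem IsPrimitiveRoot.nthRootsFinset_one_eq_image {R : Type*} [CommRing R] [IsDomain R]
    [DecidableEq R] {ω : R} {e : ℕ} (hω : IsPrimitiveRoot ω e) (he : 0 < e) :
    nthRootsFinset e (1 : R) = (range e).image (ω ^ ·) := by
  have : NeZero e := ⟨he.ne'⟩
  ext ζ
  rw [Polynomial.mem_nthRootsFinset he, mem_image]
  constructor
  · intro hζ
    obtain ⟨i, hi, rfl⟩ := hω.eq_pow_of_pow_eq_one hζ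
    exact ⟨i, mem_range.2 hi, rfl⟩
  · rintro ⟨i, -, rfl⟩
    rw [← pow_mul, mul_comm, pow_mul, hω.pow_eq_one, one_pow]

theorem Complex.sum_nthRootsFinset_one_pow {e : ℕ} (he : 0 < e) (s : ℕ) :
    ∑ ζ ∈ nthRootsFinset e (1 : ℂ), ζ ^ s = if e ∣ s then (e : ℂ) else 0 := by
  obtain ⟨ω, hω⟩ : ∃ ω : ℂ, IsPrimitiveRoot ω e := ⟨_, Complex.isPrimitiveRoot_exp e he.ne'⟩
  rw [hω.nthRootsFinset_one_eq_image he, sum_image fun i hi j hj hij ↦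
    hω.pow_inj (mem_range.1 hi) (mem_range.1 hj) hij]
  simp_rw [← pow_mul, mul_comm _ s, pow_mul]
  split_ifs with hs
  · simp [(hω.pow_eq_one_iff_dvd s).2 hs]
  · have hω1 : ω ^ s ≠ 1 := fun h ↦ hs ((hω.pow_eq_one_iff_dvd s).1 h)
    rw [geom_sum_eq hω1, ← pow_mul, mul_comm, pow_mul, hω.pow_eq_one, one_pow, sub_self, zero_div]

theorem sum_divisors_ramanujanSum {e : ℕ} (he : 0 < e) (s : ℕ) :
    ∑ d ∈ e.divisors, ramanujanSum d s = if e ∣ s then (e : ℂ) else 0 := by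
  rw [← Complex.sum_nthRootsFinset_one_pow he,
    IsPrimitiveRoot.nthRoots_one_eq_biUnion_primitiveRoots,
    sum_biUnion fun i _ j _ hij ↦ IsPrimitiveRoot.disjoint hij]
  rfl

theorem ramanujanSum_eq_sum_divisors {q : ℕ} (hq : 0 < q) (s : ℕ) :
    ramanujanSum q s = ∑ d ∈ q.divisors, (μ (q / d) : ℂ) * if d ∣ s then (d : ℂ) else 0 := by
  rw [← (sum_eq_iff_sum_mul_moebius_eq.1 (fun e he ↦ sum_divisors_ramanujanSum he s)) q hq,
    Nat.sum_divisorsAntidiagonal' (fun a b ↦ (μ a : ℂ) * if b ∣ s then (b : ℂ) else 0)]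

theorem ramanujanSum_one {q : ℕ} (hq : 0 < q) : ramanujanSum q 1 = μ q := by
  rw [ramanujanSum_eq_sum_divisors hq, sum_eq_single 1]
  · simp
  · intro d _ hd1
    simp [Nat.dvd_one, hd1]
  · simp [hq.ne']

theorem ramanujanSum_two {q : ℕ} (hq : 0 < q) :
    ramanujanSum q 2 = ((μ q + if 2 ∣ q then 2 * μ (q / 2) else 0 : ℤ) : ℂ) := by
  have hvanish (s : Finset ℕ) (hs : ∀ d ∈ q.divisors, d ∣ 2 → d ∈ s) :
      ∀ d ∈ q.divisors, d ∉ s → ((μ (q / d) : ℂ) * if d ∣ 2 then (d : ℂ) else 0) = 0 :=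
    fun d hd hds ↦ by rw [if_neg fun h ↦ hds (hs d hd h), mul_zero]
  rw [ramanujanSum_eq_sum_divisors hq]
  by_cases h2 : 2 ∣ q
  · rw [← sum_subset (s₁ := {1, 2}) ?_ (hvanish _ ?_), sum_pair (by norm_num : (1 : ℕ) ≠ 2)]
    · simp [h2, mul_comm]
    · simp [insert_subset_iff, h2, hq.ne']
    · intro d _ hd
      rcases (Nat.dvd_prime Nat.prime_two).1 hd with rfl | rfl <;> simp
  · rw [← sum_subset (s₁ := {1}) ?_ (hvanish _ ?_), sum_singleton]
    · simp [h2]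
    · simp [hq.ne']
    · intro d hd hd2
      rcases (Nat.dvd_prime Nat.prime_two).1 hd2 with rfl | rfl
      · simp
      · exact absurd (Nat.dvd_of_mem_divisors hd) h2

theorem IsPrimitiveRoot.prod_range_X_add_C_pow {R : Type*} [CommRing R] [IsDomain R] {ω : R} {e : ℕ}
    (hω : IsPrimitiveRoot ω e) (he : 0 < e) (m : ℕ) :
    ∏ i ∈ range (e * m), (X + C (ω ^ i)) = expand R e ((X + C ((-1) ^ (e + 1))) ^ m) := by
  have hperiod : ∏ i ∈ range e, (X + C (ω ^ i)) = X ^ e + C ((-1) ^ (e + 1)) := by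
    rw [pow_succ, mul_neg_one, map_neg, ← sub_eq_add_neg, X_pow_sub_C_eq_prod hω he rfl]
    simp_rw [mul_neg_one, map_neg, sub_neg_eq_add]
  induction m with
  | zero => simp
  | succ m ih =>
    rw [mul_add_one, prod_range_add, ih, pow_succ (X + C _) m, map_mul, map_add, expand_X,
      expand_C, ← hperiod]
    congr 1
    refine prod_congr rfl fun i _ ↦ ?_
    rw [pow_add, pow_mul, hω.pow_eq_one, one_pow, one_mul]

theorem IsPrimitiveRoot.coeff_prod_range_X_add_C_pow {R : Type*} [CommRing R] [IsDomain R] {ω : R}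
    {e n k : ℕ} (hω : IsPrimitiveRoot ω e) (he : 0 < e) (hen : e ∣ n) (hkn : k ≤ n) :
    (∏ i ∈ range n, (X + C (ω ^ i))).coeff (n - k) =
      if e ∣ k then (-1) ^ ((e + 1) * (k / e)) * ((n / e).choose (k / e) : R) else 0 := by
  obtain ⟨m, rfl⟩ := hen
  have hdvd := Nat.dvd_sub_iff_right hkn (dvd_mul_right e m)
  rw [hω.prod_range_X_add_C_pow he, coeff_expand he, coeff_X_add_C_pow]
  by_cases hk : e ∣ k
  · rw [if_pos (hdvd.2 hk), if_pos hk]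
    obtain ⟨j, rfl⟩ := hk
    have hjm : j ≤ m := Nat.le_of_mul_le_mul_left hkn he
    rw [← Nat.mul_sub, Nat.mul_div_cancel_left _ he, Nat.mul_div_cancel_left _ he,
      Nat.mul_div_cancel_left _ he, Nat.sub_sub_self hjm, Nat.choose_symm hjm, pow_mul]
  · rw [if_neg (mt hdvd.1 hk), if_neg hk]

theorem ZMod.prod_univ_eq_prod_range {M : Type*} [CommMonoid M] (n : ℕ) [NeZero n]
    (f : ZMod n → M) : ∏ a, f a = ∏ i ∈ range n, f i :=
  prod_nbij' ZMod.val Nat.cast (fun a _ ↦ mem_range.2 (ZMod.val_lt a)) (fun _ _ ↦ mem_univ _)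
    (fun a _ ↦ ZMod.natCast_zmod_val a) (fun i hi ↦ ZMod.val_cast_of_lt (mem_range.1 hi))
    (fun a _ ↦ by rw [ZMod.natCast_zmod_val])

theorem AddChar.map_sum_eq_prod {A M ι : Type*} [AddCommMonoid A] [CommMonoid M]
    (ψ : AddChar A M) (s : Finset ι) (f : ι → A) : ψ (∑ i ∈ s, f i) = ∏ i ∈ s, ψ (f i) :=
  map_prod ψ.toMonoidHom (fun i ↦ Multiplicative.ofAdd (f i)) s

section stdAddChar

variable {n : ℕ} [NeZero n]

open ZMod

theorem ZMod.isPrimitiveRoot_stdAddChar (t : ZMod n) :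
    IsPrimitiveRoot (stdAddChar t) (addOrderOf t) := by
  have h := orderOf_injective (stdAddChar (N := n)).toMonoidHom injective_stdAddChar
    (Multiplicative.ofAdd t)
  rw [orderOf_ofAdd_eq_addOrderOf] at h
  exact h ▸ IsPrimitiveRoot.orderOf _

theorem ZMod.stdAddChar_mul_natCast (t : ZMod n) (i : ℕ) :
    stdAddChar (t * (i : ZMod n)) = stdAddChar t ^ i := by
  rw [mul_comm, ← nsmul_eq_mul, AddChar.map_nsmul_eq_pow]

theorem ZMod.image_stdAddChar_filter_addOrderOf {e : ℕ} (hen : e ∣ n) :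
    ({t | addOrderOf t = e} : Finset (ZMod n)).image stdAddChar = primitiveRoots e ℂ := by
  have he : 0 < e := Nat.pos_of_dvd_of_pos hen (NeZero.pos n)
  ext ζ
  simp only [mem_image, mem_filter, mem_univ, true_and, mem_primitiveRoots he]
  constructor
  · rintro ⟨t, rfl, rfl⟩
    exact isPrimitiveRoot_stdAddChar t
  · intro hζ
    have h1 : IsPrimitiveRoot (stdAddChar (1 : ZMod n)) n := by
      simpa only [addOrderOf_one] using isPrimitiveRoot_stdAddChar (1 : ZMod n)
    obtain ⟨i, -, rfl⟩ := h1.eq_pow_of_pow_eq_one ((hζ.pow_eq_one_iff_dvd n).2 hen)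
    refine ⟨i, ?_, by rw [← stdAddChar_mul_natCast, one_mul]⟩
    exact (isPrimitiveRoot_stdAddChar (i : ZMod n)).unique
      (by rwa [← stdAddChar_mul_natCast, one_mul] at hζ)

theorem ZMod.sum_filter_addOrderOf_stdAddChar {e : ℕ} (hen : e ∣ n) (s : ℕ) :
    ∑ t with addOrderOf t = e, stdAddChar (-(t * (s : ZMod n))) = ramanujanSum e s := by
  rw [ramanujanSum, ← image_stdAddChar_filter_addOrderOf hen,
    sum_image fun _ _ _ _ h ↦ injective_stdAddChar h]
  refine sum_nbij' Neg.neg Neg.neg (by simp) (by simp) (fun t _ ↦ neg_neg t)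
    (fun t _ ↦ neg_neg t) fun t _ ↦ ?_
  rw [← neg_mul, stdAddChar_mul_natCast]

theorem ZMod.sum_powersetCard_prod_stdAddChar {k : ℕ} (hkn : k ≤ n) (t : ZMod n) :
    ∑ Q ∈ powersetCard k univ, ∏ a ∈ Q, stdAddChar (t * a) =
      if addOrderOf t ∣ k then
        (-1) ^ ((addOrderOf t + 1) * (k / addOrderOf t)) *
          ((n / addOrderOf t).choose (k / addOrderOf t) : ℂ)
      else 0 := by
  have hcard : #(univ : Finset (ZMod n)) = n := by simp
  have h := Finset.prod_X_add_C_coeff univ (fun a ↦ stdAddChar (t * a)) (k := n - k)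
    (by omega)
  rw [hcard, Nat.sub_sub_self hkn] at h
  rw [← h, prod_univ_eq_prod_range n (fun a ↦ X + C (stdAddChar (t * a)))]
  simp_rw [stdAddChar_mul_natCast]
  exact (isPrimitiveRoot_stdAddChar t).coeff_prod_range_X_add_C_pow (addOrderOf_pos t)
    (by simpa using addOrderOf_dvd_card (x := t)) hkn

theorem ZMod.natCast_mul_card_filter_sum_eq (𝒬 : Finset (Finset (ZMod n))) (s : ZMod n) :
    (n : ℂ) * #{Q ∈ 𝒬 | ∑ a ∈ Q, a = s} =
      ∑ t, stdAddChar (-(t * s)) * ∑ Q ∈ 𝒬, ∏ a ∈ Q, stdAddChar (t * a) := by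
  calc (n : ℂ) * #{Q ∈ 𝒬 | ∑ a ∈ Q, a = s}
      = ∑ Q ∈ 𝒬, ∑ t, stdAddChar (t * (∑ a ∈ Q, a - s)) := by
        rw [card_filter, Nat.cast_sum, mul_sum]
        refine sum_congr rfl fun Q _ ↦ ?_
        rw [AddChar.sum_mulShift _ (isPrimitive_stdAddChar n), ZMod.card]
        by_cases h : ∑ a ∈ Q, a = s <;> simp [h, sub_eq_zero]
    _ = _ := by
        rw [sum_comm]
        refine sum_congr rfl fun t _ ↦ ?_
        rw [mul_sum]
        refine sum_congr rfl fun Q _ ↦ ?_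
        rw [mul_sub, sub_eq_neg_add, AddChar.map_add_eq_mul, mul_sum, AddChar.map_sum_eq_prod]

theorem ZMod.sum_stdAddChar_mul_addOrderOf (f : ℕ → ℂ) (s : ℕ) :
    ∑ t : ZMod n, stdAddChar (-(t * (s : ZMod n))) * f (addOrderOf t) =
      ∑ e ∈ n.divisors, f e * ramanujanSum e s := by
  rw [← sum_fiberwise_of_maps_to (g := addOrderOf) (t := n.divisors) fun t _ ↦
    Nat.mem_divisors.2 ⟨by simpa using addOrderOf_dvd_card (x := t), NeZero.ne n⟩]
  refine sum_congr rfl fun e he ↦ ?_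
  rw [← sum_filter_addOrderOf_stdAddChar (Nat.dvd_of_mem_divisors he), mul_sum]
  refine sum_congr rfl fun t ht ↦ ?_
  rw [(mem_filter.1 ht).2, mul_comm]

end stdAddChar

theorem natCast_mul_T {n k : ℕ} [NeZero n] (hkn : k ≤ n) (s : ℕ) :
    (n : ℂ) * T n k s = ∑ e ∈ (n.gcd k).divisors,
      (-1) ^ ((e + 1) * (k / e)) * ((n / e).choose (k / e) : ℂ) * ramanujanSum e s := by
  have hT : T n k s = #{Q ∈ powersetCard k univ | ∑ a ∈ Q, a = ((s : ℤ) : ZMod n)} := by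
    rw [T, Nat.card_eq_fintype_card, Fintype.card_subtype]
    congr 1
    ext Q
    simp
  rw [hT, ZMod.natCast_mul_card_filter_sum_eq, Int.cast_natCast]
  simp_rw [ZMod.sum_powersetCard_prod_stdAddChar hkn]
  rw [ZMod.sum_stdAddChar_mul_addOrderOf (fun e ↦ if e ∣ k then
    (-1) ^ ((e + 1) * (k / e)) * ((n / e).choose (k / e) : ℂ) else 0) s]
  have hdiv : {e ∈ n.divisors | e ∣ k} = (n.gcd k).divisors := by
    ext e
    simp [Nat.dvd_gcd_iff, NeZero.ne n]
  rw [← hdiv, sum_filter]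
  refine sum_congr rfl fun e _ ↦ ?_
  split_ifs <;> simp

theorem T_eq_L_of_neg_one_pow_mul_ramanujanSum {n k : ℕ} (hn : 0 < n) (hkn : k ≤ n) (s : ℕ)
    (h : ∀ e ∈ (n.gcd k).divisors, (-1 : ℂ) ^ ((e + 1) * (k / e)) * ramanujanSum e s = μ e) :
    (T n k s : ℚ) = L n k := by
  have : NeZero n := ⟨hn.ne'⟩
  have key : ((n * T n k s : ℚ) : ℂ) =
      ((∑ e ∈ (n.gcd k).divisors, (μ e : ℚ) * (n / e).choose (k / e) : ℚ) : ℂ) := by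
    push_cast
    rw [natCast_mul_T hkn]
    refine sum_congr rfl fun e he ↦ ?_
    rw [mul_right_comm, h e he, mul_comm]
  rw [L, ← Rat.cast_injective key]
  field_simp

theorem neg_one_pow_mul_moebius_of_dvd {e k : ℕ} (hek : e ∣ k) (hk : Odd k ∨ k % 4 = 0) :
    (-1 : ℤ) ^ ((e + 1) * (k / e)) * μ e = μ e := by
  obtain ⟨j, rfl⟩ := hek
  rcases Nat.even_or_odd e with ⟨m, rfl⟩ | he
  · by_cases hm : Even m
    · obtain ⟨r, rfl⟩ := hm
      have : ¬ Squarefree (r + r + (r + r)) := fun h ↦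
        Nat.isUnit_iff.not.2 (by norm_num) (h 2 ⟨r, by ring⟩)
      rw [moebius_eq_zero_of_not_squarefree this, mul_zero]
    · rw [Nat.not_even_iff_odd] at hm
      have hmj : Even (m * j) := by
        have : (m + m) * j = 2 * (m * j) := by ring
        rcases hk with hk | hk
        · exact absurd hk (by rw [this, Nat.not_odd_iff_even]; exact even_two_mul _)
        · exact Nat.even_iff.2 (by omega)
      have hj : Even j := (Nat.even_mul.1 hmj).resolve_left (Nat.not_even_iff_odd.2 hm)
      rw [Nat.mul_div_cancel_left _ (by have := hm.pos; omega), (hj.mul_left _).neg_one_pow,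
        one_mul]
  · rw [(he.add_one.mul_right _).neg_one_pow, one_mul]

theorem neg_one_pow_mul_moebius_add_of_dvd {e k : ℕ} (hek : e ∣ k) (hk : k % 4 = 2) :
    (-1 : ℤ) ^ ((e + 1) * (k / e)) * (μ e + if 2 ∣ e then 2 * μ (e / 2) else 0) = μ e := by
  obtain ⟨j, rfl⟩ := hek
  rcases Nat.even_or_odd e with ⟨m, rfl⟩ | he
  · have h2m : m + m = 2 * m := by ring
    have hmj : Odd (m * j) := Nat.odd_iff.2 (by rw [h2m, mul_assoc] at hk; omega)
    obtain ⟨hm, hj⟩ := Nat.odd_mul.1 hmj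
    have hμ : μ (2 * m) = -μ m := by
      rw [isMultiplicative_moebius.map_mul_of_coprime (Nat.coprime_two_left.2 hm),
        moebius_apply_prime Nat.prime_two, neg_one_mul]
    rw [h2m, if_pos (dvd_mul_right 2 m), Nat.mul_div_cancel_left _ two_pos,
      Nat.mul_div_cancel_left _ (by have := hm.pos; omega), hμ,
      ((odd_two_mul_add_one m).mul hj).neg_one_pow]
    ring
  · rw [(he.add_one.mul_right _).neg_one_pow, if_neg he.not_two_dvd_nat]
    ring

theorem stmt_14_general (n k : ℕ) (hkn : k < n) :
    (k % 4 = 2 → (T n k 2 : ℚ) = L n k) ∧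
    ((Odd k ∨ k % 4 = 0) → (T n k 1 : ℚ) = L n k) := by
  have hn : 0 < n := by omega
  have hdvd {e : ℕ} (he : e ∈ (n.gcd k).divisors) : e ∣ k :=
    (Nat.dvd_of_mem_divisors he).trans (Nat.gcd_dvd_right n k)
  refine ⟨fun hk ↦ ?_, fun hk ↦ ?_⟩
  · refine T_eq_L_of_neg_one_pow_mul_ramanujanSum hn hkn.le 2 fun e he ↦ ?_
    rw [ramanujanSum_two (Nat.pos_of_mem_divisors he)]
    exact_mod_cast neg_one_pow_mul_moebius_add_of_dvd (hdvd he) hk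
  · refine T_eq_L_of_neg_one_pow_mul_ramanujanSum hn hkn.le 1 fun e he ↦ ?_
    rw [ramanujanSum_one (Nat.pos_of_mem_divisors he)]
    exact_mod_cast neg_one_pow_mul_moebius_of_dvd (hdvd he) hk

/-- If `k ≡ 2 (mod 4)` then `T(n,k,2) = L(n,k)`; if `k` is odd or `k ≡ 0 (mod 4)`
then `T(n,k,1) = L(n,k)`. -/
theorem stmt_14 (n k : ℕ) (hk : 0 < k) (hkn : k < n) :
    (k % 4 = 2 → (T n k 2 : ℚ) = L n k) ∧
    ((Odd k ∨ k % 4 = 0) → (T n k 1 : ℚ) = L n k) :=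
  stmt_14_general n k hkn
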